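/- arXiv:1206.6023 — 3 statements merged into one kernel-verified Lean document; each statement's English description precedes it below -/
import Mathlib

section
/- If B ⊆ A^{m+n} is mutually algebraic with m, n ≥ 1, then the projection of B onto the last n coordinates, {y ∈ A^n : ∃x ∈ A^m, (x,y) ∈ B}, is a mutually algebraic subset of A^n (vacuously when n = 1). -/
open Set

/-- `B ⊆ A^n` is mutually algebraic with bound `K`: for every proper partition of the
coordinates `{1,...,n}` into disjoint nonempty sets `X` and `Y` (here `Y` with `Yᶜ = X`
nonempty, i.e. `Y ≠ univ`), every fiber of the projection onto the `Y`-coordinates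
restricted to `B` has at most `K` elements. -/
def MutuallyAlgebraicWith {A : Type*} {n : ℕ} (B : Set (Fin n → A)) (K : ℕ) : Prop :=
  ∀ Y : Set (Fin n), Y.Nonempty → Y ≠ Set.univ → ∀ v : Fin n → A,
    ({b ∈ B | ∀ i ∈ Y, b i = v i}).Finite ∧ ({b ∈ B | ∀ i ∈ Y, b i = v i}).ncard ≤ K

/-- `B ⊆ A^n` is mutually algebraic if it is mutually algebraic with some bound `K`. -/
def MutuallyAlgebraic {A : Type*} {n : ℕ} (B : Set (Fin n → A)) : Prop :=
  ∃ K : ℕ, MutuallyAlgebraicWith B K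

/-!
Restrict the tuples of `B` along an injective coordinate map `f` that misses some coordinate.
The fiber of the restriction over `v` on `Y` lies in the image of the fiber of `B` over an
extension of `v` on `f '' Y`, a nonempty proper set of coordinates, so it has at most `K`
elements. The projection onto the last `n` coordinates is the restriction along `Fin.natAdd m`,
which misses coordinate `0` since `m ≥ 1`.
-/

theorem MutuallyAlgebraicWith.image_comp {A : Type*} {k n : ℕ} {B : Set (Fin k → A)} {K : ℕ}
    (hB : MutuallyAlgebraicWith B K) {f : Fin n → Fin k} (hf : f.Injective)
    (hrange : range f ≠ univ) : MutuallyAlgebraicWith ((· ∘ f) '' B) K := by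
  rintro Y ⟨i₀, hi₀⟩ - v
  set v' : Fin k → A := Function.extend f v fun _ => v i₀
  have hfY_ne_univ : f '' Y ≠ univ := fun h => hrange (eq_univ_of_univ_subset <|
    h ▸ image_subset_range f Y)
  obtain ⟨hfin, hcard⟩ := hB (f '' Y) ⟨f i₀, mem_image_of_mem f hi₀⟩ hfY_ne_univ v'
  have hsub : {y ∈ (· ∘ f) '' B | ∀ i ∈ Y, y i = v i} ⊆
      (· ∘ f) '' {b ∈ B | ∀ j ∈ f '' Y, b j = v' j} := by
    rintro _ ⟨⟨b, hb, rfl⟩, hbv⟩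
    refine ⟨b, ⟨hb, ?_⟩, rfl⟩
    rintro _ ⟨i, hi, rfl⟩
    exact (hbv i hi).trans (hf.extend_apply v _ i).symm
  exact ⟨(hfin.image _).subset hsub,
    (ncard_le_ncard hsub (hfin.image _)).trans ((ncard_image_le hfin).trans hcard)⟩

theorem range_natAdd_ne_univ {m : ℕ} (hm : 1 ≤ m) (n : ℕ) :
    range (Fin.natAdd m : Fin n → Fin (m + n)) ≠ univ := by
  rw [Fin.range_natAdd, ne_univ_iff_exists_notMem]
  exact ⟨Fin.castAdd n ⟨0, hm⟩, by simp; omega⟩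

theorem setOf_append_mem_eq_image_comp_natAdd {A : Type*} {m n : ℕ}
    (B : Set (Fin (m + n) → A)) :
    {y : Fin n → A | ∃ x : Fin m → A, Fin.append x y ∈ B} = (· ∘ Fin.natAdd m) '' B := by
  ext y
  constructor
  · rintro ⟨x, hx⟩
    exact ⟨_, hx, funext fun i => Fin.append_right x y i⟩
  · rintro ⟨b, hb, rfl⟩
    exact ⟨b ∘ Fin.castAdd n, by rwa [← Fin.append_castAdd_natAdd (f := b)] at hb⟩

theorem stmt7_general {A : Type*} {m n : ℕ} (hm : 1 ≤ m)
    {B : Set (Fin (m + n) → A)} (hB : MutuallyAlgebraic B) :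
    MutuallyAlgebraic {y : Fin n → A | ∃ x : Fin m → A, Fin.append x y ∈ B} := by
  obtain ⟨K, hK⟩ := hB
  rw [setOf_append_mem_eq_image_comp_natAdd]
  exact ⟨K, hK.image_comp (Fin.natAdd_injective n m) (range_natAdd_ne_univ hm n)⟩

/-- If `B ⊆ A^(m+n)` is mutually algebraic with `m, n ≥ 1`, then the projection of `B` onto
the last `n` coordinates is a mutually algebraic subset of `A^n`. -/
theorem stmt7 {A : Type*} {m n : ℕ} (hm : 1 ≤ m) (hn : 1 ≤ n)
    {B : Set (Fin (m + n) → A)} (hB : MutuallyAlgebraic B) :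
    MutuallyAlgebraic {y : Fin n → A | ∃ x : Fin m → A, Fin.append x y ∈ B} :=
  stmt7_general hm hB
end

section
/- Let B₁ ⊆ A^{1+m} and B₂ ⊆ A^{1+n} be mutually algebraic sets sharing their first coordinate. Then the 'join' C = {(x, u, v) ∈ A^{1+m+n} : (x,u) ∈ B₁ and (x,v) ∈ B₂} is mutually algebraic. -/
open Set

/-!
A point of the join `C` is determined by its `B₁`-part `(x, u)` and its `B₂`-part `(x, v)`.
Once the `B₁`-part is fixed, so is the shared coordinate `x`, and mutual algebraicity of `B₂`
leaves at most `K₂ + 1` choices of `(x, v)`; symmetrically with the roles exchanged. A nonempty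
set `Y` of fixed coordinates of `C` meets the coordinates of `B₁` (say): then the `B₁`-parts of
the fiber lie in a fiber of `B₁`, of size at most `K₁ + 1`, and each extends in at most `K₂ + 1`
ways, so the fiber of `C` has at most `(K₁ + 1) * (K₂ + 1)` elements.
-/

namespace Set

variable {α β : Type*}

theorem encard_le_mul_of_mapsTo {f : α → β} {s : Set α} {t : Set β} {k n : ℕ}
    (hf : MapsTo f s t) (ht : t.encard ≤ k) (hfib : ∀ b ∈ t, {a ∈ s | f a = b}.encard ≤ n) :
    s.encard ≤ k * n := by
  have htfin : t.Finite := finite_of_encard_le_coe ht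
  have hcover : s ⊆ ⋃ b ∈ htfin.toFinset, {a ∈ s | f a = b} := fun a ha => by
    simpa using ⟨ha, hf ha⟩
  calc s.encard ≤ ∑ b ∈ htfin.toFinset, {a ∈ s | f a = b}.encard :=
        (encard_le_encard hcover).trans (htfin.toFinset.set_encard_biUnion_le _)
    _ ≤ ∑ _b ∈ htfin.toFinset, (n : ℕ∞) := Finset.sum_le_sum fun b hb => hfib b (by simpa using hb)
    _ = t.encard * n := by
        rw [Finset.sum_const, nsmul_eq_mul, ← htfin.cast_ncard_eq, ncard_eq_toFinset_card t htfin]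
    _ ≤ k * n := by gcongr

end Set

theorem mutuallyAlgebraicWith_iff_encard_le {A : Type*} {n : ℕ} {B : Set (Fin n → A)} {K : ℕ} :
    MutuallyAlgebraicWith B K ↔ ∀ Y : Set (Fin n), Y.Nonempty → Y ≠ univ → ∀ v : Fin n → A,
      {b ∈ B | ∀ i ∈ Y, b i = v i}.encard ≤ K := by
  simp only [MutuallyAlgebraicWith, encard_le_coe_iff_finite_ncard_le]

namespace MutuallyAlgebraicWith

variable {A : Type*} {n : ℕ} {B : Set (Fin n → A)} {K : ℕ}

theorem encard_fiber_le_succ (hB : MutuallyAlgebraicWith B K) {Y : Set (Fin n)}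
    (hY : Y.Nonempty) (v : Fin n → A) : {b ∈ B | ∀ i ∈ Y, b i = v i}.encard ≤ K + 1 := by
  rcases eq_or_ne Y univ with rfl | hYne
  · have hsub : {b ∈ B | ∀ i ∈ univ, b i = v i} ⊆ {v} := fun b hb => funext fun i => hb.2 i trivial
    calc _ ≤ ({v} : Set (Fin n → A)).encard := encard_le_encard hsub
      _ ≤ K + 1 := by rw [encard_singleton]; exact le_add_self
  · exact (mutuallyAlgebraicWith_iff_encard_le.1 hB Y hY hYne v).trans le_self_add

variable {ι : Type*} {C : Set (ι → A)}

theorem encard_fiber_le_of_mapsTo_comp {p : Fin n → ι} {L : ℕ}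
    (hB : MutuallyAlgebraicWith B K) (hCB : MapsTo (· ∘ p) C B)
    (hfib : ∀ b, {c ∈ C | c ∘ p = b}.encard ≤ L) {Y : Set ι} (hY : (p ⁻¹' Y).Nonempty)
    (w : ι → A) : {c ∈ C | ∀ i ∈ Y, c i = w i}.encard ≤ (K + 1) * L := by
  refine encard_le_mul_of_mapsTo (f := (· ∘ p)) (t := {b ∈ B | ∀ j ∈ p ⁻¹' Y, b j = (w ∘ p) j})
    (fun c hc => ⟨hCB hc.1, fun j hj => hc.2 _ hj⟩) ?_ fun b _ => ?_
  · exact_mod_cast hB.encard_fiber_le_succ hY (w ∘ p)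
  · exact (encard_le_encard (t := {c ∈ C | c ∘ p = b}) fun c hc => ⟨hc.1.1, hc.2⟩).trans (hfib b)

theorem encard_fiber_comp_le_of_shared_coord {k : ℕ} {p₁ : Fin k → ι} {p : Fin n → ι}
    (hB : MutuallyAlgebraicWith B K) (hCB : MapsTo (· ∘ p) C B)
    (hcover : range p₁ ∪ range p = univ) {j₁ : Fin k} {j : Fin n} (hshared : p j = p₁ j₁)
    (a : Fin k → A) : {c ∈ C | c ∘ p₁ = a}.encard ≤ K + 1 := by
  have hinj : InjOn (· ∘ p) {c ∈ C | c ∘ p₁ = a} := by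
    rintro c ⟨-, hc⟩ c' ⟨-, hc'⟩ heq
    funext i
    rcases (hcover ▸ mem_univ i : i ∈ range p₁ ∪ range p) with ⟨i₁, rfl⟩ | ⟨i₂, rfl⟩
    · exact congrFun (hc.trans hc'.symm) i₁
    · exact congrFun heq i₂
  refine (encard_le_encard_of_injOn (t := {b ∈ B | ∀ i ∈ ({j} : Set (Fin n)), b i = a j₁})
    ?_ hinj).trans (hB.encard_fiber_le_succ (singleton_nonempty j) _)
  rintro c ⟨hc, rfl⟩
  refine ⟨hCB hc, ?_⟩
  rintro i rfl
  simp [hshared]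

end MutuallyAlgebraicWith

section Join

variable {A : Type*} {m n : ℕ}

def leftCoords (m n : ℕ) : Fin (1 + m) → Fin (1 + m + n) := Fin.castAdd n

def rightCoords (m n : ℕ) : Fin (1 + n) → Fin (1 + m + n) :=
  Fin.append (Fin.castAdd n ∘ Fin.castAdd m) (Fin.natAdd (1 + m))

theorem append_append_comp_leftCoords (x : Fin 1 → A) (u : Fin m → A) (v : Fin n → A) :
    Fin.append (Fin.append x u) v ∘ leftCoords m n = Fin.append x u := by
  funext j
  simp [leftCoords]

theorem append_append_comp_rightCoords (x : Fin 1 → A) (u : Fin m → A) (v : Fin n → A) :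
    Fin.append (Fin.append x u) v ∘ rightCoords m n = Fin.append x v := by
  funext j
  refine Fin.addCases (fun j => ?_) (fun j => ?_) j <;> simp [rightCoords]

theorem range_leftCoords_union_range_rightCoords :
    range (leftCoords m n) ∪ range (rightCoords m n) = univ := by
  refine eq_univ_of_forall fun i => Fin.addCases (fun j => ?_) (fun j => ?_) i
  · exact Or.inl ⟨j, rfl⟩
  · exact Or.inr ⟨Fin.natAdd 1 j, by simp [rightCoords]⟩

theorem rightCoords_zero :
    rightCoords m n (Fin.castAdd n 0) = leftCoords m n (Fin.castAdd m 0) := by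
  simp [rightCoords, leftCoords]

end Join

/-- If `B₁ ⊆ A^(1+m)` and `B₂ ⊆ A^(1+n)` are mutually algebraic sets sharing their first
coordinate, then the join `C = {(x,u,v) : (x,u) ∈ B₁ ∧ (x,v) ∈ B₂}` is mutually algebraic. -/
theorem stmt9 {A : Type*} {m n : ℕ}
    {B₁ : Set (Fin (1 + m) → A)} {B₂ : Set (Fin (1 + n) → A)}
    (h₁ : MutuallyAlgebraic B₁) (h₂ : MutuallyAlgebraic B₂) :
    MutuallyAlgebraic {c : Fin (1 + m + n) → A |
      ∃ (x : Fin 1 → A) (u : Fin m → A) (v : Fin n → A),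
        c = Fin.append (Fin.append x u) v ∧
        Fin.append x u ∈ B₁ ∧ Fin.append x v ∈ B₂} := by
  obtain ⟨K₁, h₁⟩ := h₁
  obtain ⟨K₂, h₂⟩ := h₂
  set C : Set (Fin (1 + m + n) → A) := {c | ∃ (x : Fin 1 → A) (u : Fin m → A) (v : Fin n → A),
    c = Fin.append (Fin.append x u) v ∧ Fin.append x u ∈ B₁ ∧ Fin.append x v ∈ B₂}
  have hC₁ : MapsTo (· ∘ leftCoords m n) C B₁ := by
    rintro _ ⟨x, u, v, rfl, hu, -⟩
    simpa only [append_append_comp_leftCoords] using hu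
  have hC₂ : MapsTo (· ∘ rightCoords m n) C B₂ := by
    rintro _ ⟨x, u, v, rfl, -, hv⟩
    simpa only [append_append_comp_rightCoords] using hv
  have hcover := range_leftCoords_union_range_rightCoords (m := m) (n := n)
  refine ⟨(K₁ + 1) * (K₂ + 1), mutuallyAlgebraicWith_iff_encard_le.2 fun Y ⟨i, hi⟩ _ w => ?_⟩
  rcases (hcover ▸ mem_univ i : i ∈ _ ∪ _) with ⟨j, rfl⟩ | ⟨j, rfl⟩
  · exact_mod_cast h₁.encard_fiber_le_of_mapsTo_comp hC₁ (fun a =>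
      h₂.encard_fiber_comp_le_of_shared_coord hC₂ hcover rightCoords_zero a) ⟨j, hi⟩ w
  · rw [mul_comm]
    exact_mod_cast h₂.encard_fiber_le_of_mapsTo_comp hC₂ (fun b =>
      h₁.encard_fiber_comp_le_of_shared_coord hC₁ (union_comm _ _ ▸ hcover)
        rightCoords_zero.symm b) ⟨j, hi⟩ w
end

section
/- Let M be a structure, n ≥ 2, and φ(z₁,...,zₙ) a formula with parameters from M. The following are equivalent: (1) there is K such that for every partition of the variables into disjoint nonempty tuples x̄, ȳ, M ⊨ ∀ȳ ∃^{≤K} x̄ φ(x̄, ȳ); (2) there is K such that for every partition with a single variable x and remaining tuple ȳ, M ⊨ ∀x ∃^{≤K} ȳ φ(x, ȳ). -/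
/-! Fixing more coordinates shrinks a fiber, so every fiber over a nonempty set of coordinates
lies inside a fiber over a single coordinate; conversely, with at least two coordinates a single
coordinate is itself a proper nonempty set of coordinates. Boundedness of a fiber is phrased as a
bound on its `encard`, which packages finiteness together with the bound on `ncard`. -/

open FirstOrder Set

section Fibers

variable {ι M : Type*} (P : (ι → M) → Prop)

theorem encard_fiber_le_encard_fiber_of_mem {Y : Set ι} {i : ι} (hi : i ∈ Y) (v : ι → M) :
    {b | P b ∧ ∀ k ∈ Y, b k = v k}.encard ≤ {b | P b ∧ b i = v i}.encard :=
  encard_le_encard fun _ hb => ⟨hb.1, hb.2 i hi⟩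

theorem exists_bound_fibers_iff_exists_bound_singleton_fibers [Nontrivial ι] :
    (∃ K : ℕ, ∀ Y : Set ι, Y.Nonempty → Y ≠ univ → ∀ v : ι → M,
      {b | P b ∧ ∀ k ∈ Y, b k = v k}.encard ≤ K) ↔
    (∃ K : ℕ, ∀ (i : ι) (a : M), {b | P b ∧ b i = a}.encard ≤ K) := by
  constructor
  · rintro ⟨K, hK⟩
    refine ⟨K, fun i a => ?_⟩
    simpa using hK {i} (singleton_nonempty i) (singleton_ne_univ i) fun _ => a
  · rintro ⟨K, hK⟩
    exact ⟨K, fun Y ⟨i, hi⟩ _ v =>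
      (encard_fiber_le_encard_fiber_of_mem P hi v).trans (hK i (v i))⟩

end Fibers

/-- For a formula `φ(z₁,...,zₙ)` with parameters (`n ≥ 2`) interpreted in `M`, the following
are equivalent: (1) there is `K` such that for every proper partition of the variables into
nonempty tuples `x̄, ȳ`, `M ⊨ ∀ȳ ∃^{≤K} x̄ φ(x̄,ȳ)`; (2) there is `K` such that for every
partition isolating a single variable `x`, `M ⊨ ∀x ∃^{≤K} ȳ φ(x,ȳ)`. -/
theorem stmt18 {L : Language} {M : Type*} [L.Structure M] {n : ℕ} (hn : 2 ≤ n)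
    {γ : Type*} (φ : L.Formula (Fin n ⊕ γ)) (p : γ → M) :
    (∃ K : ℕ, ∀ Y : Set (Fin n), Y.Nonempty → Y ≠ Set.univ → ∀ v : Fin n → M,
      ({b : Fin n → M | φ.Realize (Sum.elim b p) ∧ ∀ i ∈ Y, b i = v i}).Finite ∧
      ({b : Fin n → M | φ.Realize (Sum.elim b p) ∧ ∀ i ∈ Y, b i = v i}).ncard ≤ K) ↔
    (∃ K : ℕ, ∀ (i : Fin n) (a : M),
      ({b : Fin n → M | φ.Realize (Sum.elim b p) ∧ b i = a}).Finite ∧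
      ({b : Fin n → M | φ.Realize (Sum.elim b p) ∧ b i = a}).ncard ≤ K) := by
  have : Nontrivial (Fin n) := Fin.nontrivial_iff_two_le.mpr hn
  simp only [← encard_le_coe_iff_finite_ncard_le]
  exact exists_bound_fibers_iff_exists_bound_singleton_fibers _
end
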